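/- Let $R$ be a commutative ring, $a, h \in R$, $\mathcal{A} = R[X]/(X^2-hX-a)$, with $\Delta$ as in the universal Frobenius system: $\Delta(1) = 1\otimes X + X\otimes 1 - h\,1\otimes 1$, $\Delta(X) = X\otimes X + a\,1\otimes 1$. Then $\Delta$ is a map of $\mathcal{A}$-bimodules: $\Delta(xy) = (x \otimes 1)\Delta(y) = \Delta(x)(1 \otimes y)$ for all $x, y \in \mathcal{A}$. -/

import Mathlib

/-!
If `Δ x = (x ⊗ 1) Δ 1` for every `x`, then `Δ (x y) = (x y ⊗ 1) Δ 1 = (x ⊗ 1) Δ y`, and symmetrically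
on the right. Both identities are `R`-linear in `x`, so it suffices to check them on the basis
`1, X` of `𝒜`, where they reduce to the relation `X² = h X + a`.
-/

open Polynomial
open scoped TensorProduct

section Bimodule

variable {R A : Type*} [CommSemiring R] [Semiring A] [Algebra R A] (f : A →ₗ[R] A ⊗[R] A)

theorem map_mul_eq_tmul_one_mul (hf : ∀ x, f x = (x ⊗ₜ 1) * f 1) (x y : A) :
    f (x * y) = (x ⊗ₜ[R] 1) * f y := by
  rw [hf, hf y, ← mul_assoc, Algebra.TensorProduct.tmul_mul_tmul, mul_one]

theorem map_mul_eq_mul_one_tmul (hf : ∀ x, f x = f 1 * (1 ⊗ₜ x)) (x y : A) :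
    f (x * y) = f x * (1 ⊗ₜ[R] y) := by
  rw [hf, hf x, mul_assoc, Algebra.TensorProduct.tmul_mul_tmul, one_mul]

end Bimodule

section Quadratic

variable {R A : Type*} [CommRing R] [Ring A] [Algebra R A] {a h : R} {x : A}

theorem tmul_one_mul_of_mul_self_eq (hx : x * x = h • x + a • 1) :
    (x ⊗ₜ[R] 1) * (1 ⊗ₜ x + x ⊗ₜ 1 - h • (1 ⊗ₜ 1)) = x ⊗ₜ x + a • (1 ⊗ₜ[R] (1 : A)) := by
  simp only [mul_add, mul_sub, mul_smul_comm, Algebra.TensorProduct.tmul_mul_tmul, mul_one,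
    one_mul, hx, TensorProduct.add_tmul, TensorProduct.smul_tmul']
  abel

theorem mul_one_tmul_of_mul_self_eq (hx : x * x = h • x + a • 1) :
    (1 ⊗ₜ x + x ⊗ₜ 1 - h • (1 ⊗ₜ 1)) * (1 ⊗ₜ[R] x) = x ⊗ₜ x + a • (1 ⊗ₜ[R] (1 : A)) := by
  simp only [add_mul, sub_mul, smul_mul_assoc, Algebra.TensorProduct.tmul_mul_tmul, mul_one,
    one_mul, hx, TensorProduct.tmul_add, TensorProduct.tmul_smul]
  abel

end Quadratic

namespace AdjoinRoot

variable {R M : Type*} [CommRing R] [AddCommMonoid M] [Module R M]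

theorem linearMap_ext_of_natDegree_le_two {g : R[X]} (hg : g.Monic) (hdeg : g.natDegree ≤ 2)
    {f f' : AdjoinRoot g →ₗ[R] M} (h1 : f 1 = f' 1) (hroot : f (root g) = f' (root g)) :
    f = f' := by
  refine (powerBasis' hg).basis.ext fun ⟨i, hi⟩ => ?_
  replace hi : i < 2 := hi.trans_le hdeg
  rw [PowerBasis.coe_basis, powerBasis'_gen]
  interval_cases i
  · simpa using h1
  · simpa using hroot

theorem root_mul_root_of_quadratic (a h : R) :
    root (X ^ 2 - C h * X - C a) * root (X ^ 2 - C h * X - C a) =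
      h • root (X ^ 2 - C h * X - C a) + a • 1 := by
  have h0 := mk_self (f := X ^ 2 - C h * X - C a)
  rw [map_sub, map_sub, map_mul, map_pow, mk_X, mk_C, mk_C] at h0
  rw [Algebra.smul_def, Algebra.smul_def, mul_one, algebraMap_eq]
  linear_combination h0

end AdjoinRoot

/-- The comultiplication `Δ` of the universal Frobenius system on
`𝒜 = R[X]/(X² - hX - a)` is a map of `𝒜`-bimodules:
`Δ(xy) = (x ⊗ 1)Δ(y) = Δ(x)(1 ⊗ y)`. -/
theorem stmt_12 (R : Type) [CommRing R] (a h : R)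
    (Δ : AdjoinRoot (X ^ 2 - C h * X - C a) →ₗ[R]
      AdjoinRoot (X ^ 2 - C h * X - C a) ⊗[R] AdjoinRoot (X ^ 2 - C h * X - C a))
    (hΔ1 : Δ 1 = 1 ⊗ₜ[R] AdjoinRoot.root (X ^ 2 - C h * X - C a) +
      AdjoinRoot.root (X ^ 2 - C h * X - C a) ⊗ₜ[R] 1 - h • (1 ⊗ₜ[R] 1))
    (hΔX : Δ (AdjoinRoot.root (X ^ 2 - C h * X - C a)) =
      AdjoinRoot.root (X ^ 2 - C h * X - C a) ⊗ₜ[R]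
        AdjoinRoot.root (X ^ 2 - C h * X - C a) + a • (1 ⊗ₜ[R] 1)) :
    ∀ x y : AdjoinRoot (X ^ 2 - C h * X - C a),
      Δ (x * y) = (x ⊗ₜ[R] 1) * Δ y ∧ Δ (x * y) = Δ x * (1 ⊗ₜ[R] y) := by
  have hmonic : (X ^ 2 - C h * X - C a).Monic := by monicity!
  have hdeg : (X ^ 2 - C h * X - C a).natDegree ≤ 2 := by compute_degree
  have hr := AdjoinRoot.root_mul_root_of_quadratic a h
  have hleft : ∀ x, Δ x = (x ⊗ₜ 1) * Δ 1 :=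
    LinearMap.congr_fun <| AdjoinRoot.linearMap_ext_of_natDegree_le_two hmonic hdeg
      (f' := LinearMap.mulRight R (Δ 1) ∘ₗ (TensorProduct.mk R _ _).flip 1)
      (by simp [← Algebra.TensorProduct.one_def])
      (by simpa [hΔ1, hΔX] using (tmul_one_mul_of_mul_self_eq hr).symm)
  have hright : ∀ x, Δ x = Δ 1 * (1 ⊗ₜ x) :=
    LinearMap.congr_fun <| AdjoinRoot.linearMap_ext_of_natDegree_le_two hmonic hdeg
      (f' := LinearMap.mulLeft R (Δ 1) ∘ₗ TensorProduct.mk R _ _ 1)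
      (by simp [← Algebra.TensorProduct.one_def])
      (by simpa [hΔ1, hΔX] using (mul_one_tmul_of_mul_self_eq hr).symm)
  exact fun x y => ⟨map_mul_eq_tmul_one_mul Δ hleft x y, map_mul_eq_mul_one_tmul Δ hright x y⟩
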